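/- Suppose a labelled open graph (G,I,O,λ) with I∩O = ∅ has a Pauli flow and |O| > |I|. Then there exists a subset O' ⊆ O with |O'| = |I| and a measurement labelling λ' such that (G,I,O',λ') has a Pauli flow. -/

import Mathlib

inductive MLabel | X | Y | Z | XY | XZ | YZ
deriving DecidableEq

open Finset

variable {V : Type} [Fintype V] [DecidableEq V]

/-- The odd neighbourhood of a set of vertices. -/
def Odds (G : SimpleGraph V) [DecidableRel G.Adj] (A : Finset V) : Finset V :=
  Finset.univ.filter fun v => Odd (A ∩ G.neighborFinset v).card

/-- Pauli flow conditions (P1)-(P9) for a labelled open graph. -/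
structure PauliFlow (G : SimpleGraph V) [DecidableRel G.Adj]
    (I O : Finset V) (lam : V → MLabel) (c : V → Finset V) (prec : V → V → Prop) : Prop where
  irrefl : ∀ u, ¬ prec u u
  trans : ∀ u v w, prec u v → prec v w → prec u w
  csub : ∀ u, u ∉ O → ∀ v ∈ c u, v ∉ I
  P1 : ∀ u, u ∉ O → ∀ v ∈ c u, v ∉ O → u ≠ v →
      lam v ≠ MLabel.X → lam v ≠ MLabel.Y → prec u v
  P2 : ∀ u, u ∉ O → ∀ v ∈ Odds G (c u), v ∉ O → u ≠ v →
      lam v ≠ MLabel.Y → lam v ≠ MLabel.Z → prec u v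
  P3 : ∀ u, u ∉ O → ∀ v, v ∉ O → ¬ prec u v → u ≠ v → lam v = MLabel.Y →
      (v ∈ c u ↔ v ∈ Odds G (c u))
  P4 : ∀ u, u ∉ O → lam u = MLabel.XY → u ∉ c u ∧ u ∈ Odds G (c u)
  P5 : ∀ u, u ∉ O → lam u = MLabel.XZ → u ∈ c u ∧ u ∈ Odds G (c u)
  P6 : ∀ u, u ∉ O → lam u = MLabel.YZ → u ∈ c u ∧ u ∉ Odds G (c u)
  P7 : ∀ u, u ∉ O → lam u = MLabel.X → u ∈ Odds G (c u)
  P8 : ∀ u, u ∉ O → lam u = MLabel.Z → u ∈ c u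
  P9 : ∀ u, u ∉ O → lam u = MLabel.Y → Xor' (u ∈ c u) (u ∈ Odds G (c u))

/-- Focussing conditions (F1)-(F3). -/
def Focussed (G : SimpleGraph V) [DecidableRel G.Adj]
    (O : Finset V) (lam : V → MLabel) (c : V → Finset V) : Prop :=
  ∀ v, v ∉ O →
    (∀ w, w ∉ O → w ≠ v → w ∈ c v →
      lam w = MLabel.XY ∨ lam w = MLabel.X ∨ lam w = MLabel.Y) ∧
    (∀ w, w ∉ O → w ≠ v → w ∈ Odds G (c v) →
      lam w = MLabel.XZ ∨ lam w = MLabel.YZ ∨ lam w = MLabel.Y ∨ lam w = MLabel.Z) ∧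
    (∀ w, w ∉ O → w ≠ v → lam w = MLabel.Y → (w ∈ c v ↔ w ∈ Odds G (c v)))

/-- The reduced adjacency matrix over F₂: rows indexed by non-outputs, columns by non-inputs. -/
def redAdj (G : SimpleGraph V) [DecidableRel G.Adj] (I O : Finset V) :
    Matrix {v : V // v ∉ O} {v : V // v ∉ I} (ZMod 2) :=
  Matrix.of fun v u => if G.Adj v.val u.val then 1 else 0

/-!
Over `ZMod 2`, the flow-matrix row of a non-output `u` lives on the non-input columns: it is the
adjacency row of `u` for the labels X and XY, the unit row of `u` for Z, XZ and YZ, and their sum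
for Y. A Pauli flow makes these rows linearly independent, since pairing them with the correction
sets is unitriangular with respect to the flow order. Conversely, independent rows have a dual
family, and its supports are the correction sets of a Pauli flow for the labels X, Y, Z and the
empty order.

While there are more outputs than inputs, some output `v` can be turned into a non-output labelled
X or Z with the rows staying independent. Otherwise there are fewer rows than columns, so a nonzero
`y` is orthogonal to all rows, hence to the adjacency and unit rows of all outputs; pairing `y`
with a dual vector through the symmetric adjacency matrix then forces `y = 0`.
-/

open Matrix

section LinearAlgebra

variable {ι n K : Type*} [Fintype n] [Field K]

theorem linearIndependent_of_dotProduct_triangular [Finite ι] {f g : ι → n → K}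
    (r : ι → ι → Prop) (hirrefl : ∀ i, ¬ r i i) (htrans : ∀ i j k, r i j → r j k → r i k)
    (hdiag : ∀ i, f i ⬝ᵥ g i = 1) (hoff : ∀ i j, j ≠ i → ¬ r i j → f j ⬝ᵥ g i = 0) :
    LinearIndependent K f := by
  cases nonempty_fintype ι
  rw [Fintype.linearIndependent_iff]
  intro a ha
  by_contra! hne
  have : IsTrans ι (flip r) := ⟨fun i j k hij hjk => htrans _ _ _ hjk hij⟩
  have : Std.Irrefl (flip r) := ⟨hirrefl⟩
  obtain ⟨i, hi, hmax⟩ := (Finite.wellFounded_of_trans_of_irrefl (flip r)).has_min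
    {j | a j ≠ 0} hne
  have hsum : (∑ j, a j • f j) ⬝ᵥ g i = a i := by
    rw [sum_dotProduct, Finset.sum_eq_single i]
    · rw [smul_dotProduct, hdiag, smul_eq_mul, mul_one]
    · intro j _ hji
      by_cases haj : a j = 0
      · rw [haj, zero_smul, zero_dotProduct]
      · rw [smul_dotProduct, hoff i j hji (hmax j haj), smul_zero]
    · simp
  exact hi (by rw [← hsum, ha, zero_dotProduct])

theorem LinearIndependent.exists_dotProduct_eq_single {ι : Type*} [Fintype ι] [DecidableEq ι]
    {f : ι → n → K} (hf : LinearIndependent K f) (i : ι) :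
    ∃ x : n → K, ∀ j, f j ⬝ᵥ x = (Pi.single i 1 : ι → K) j := by
  have hrange : LinearMap.range (Matrix.of f).mulVecLin = ⊤ := by
    apply Submodule.eq_top_of_finrank_eq
    rw [Module.finrank_fintype_fun_eq_card, ← hf.rank_matrix]
    rfl
  obtain ⟨x, hx⟩ := LinearMap.range_eq_top.mp hrange (Pi.single i 1)
  exact ⟨x, fun j => congrFun hx j⟩

theorem dotProduct_eq_zero_of_mem_span {s : Set (n → K)} {y w : n → K}
    (hs : ∀ v ∈ s, v ⬝ᵥ y = 0) (hw : w ∈ Submodule.span K s) : w ⬝ᵥ y = 0 := by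
  induction hw using Submodule.span_induction with
  | mem v hv => exact hs v hv
  | zero => exact zero_dotProduct y
  | add v w _ _ hv hw => rw [add_dotProduct, hv, hw, add_zero]
  | smul a v _ hv => rw [smul_dotProduct, hv, smul_zero]

theorem exists_ne_zero_forall_mem_span_dotProduct_eq_zero [Fintype ι] (f : ι → n → K)
    (hcard : Fintype.card ι < Fintype.card n) :
    ∃ y ≠ 0, ∀ w ∈ Submodule.span K (Set.range f), w ⬝ᵥ y = 0 := by
  have hker := LinearMap.ker_ne_bot_of_finrank_lt (f := (Matrix.of f).mulVecLin)
    (by simpa only [Module.finrank_fintype_fun_eq_card] using hcard)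
  obtain ⟨y, hy, hy0⟩ := (Submodule.ne_bot_iff _).mp hker
  refine ⟨y, hy0, fun w hw => dotProduct_eq_zero_of_mem_span ?_ hw⟩
  rintro _ ⟨i, rfl⟩
  exact congrFun hy i

end LinearAlgebra

namespace MLabel

/- A Pauli flow demands `u ∈ Odds G (c u)` for the labels X and XY, `u ∈ c u` for Z, XZ and YZ,
and exactly one of the two for Y. Read as a parity equation `= 1`, `xCoeff` and `zCoeff` are the
coefficients of `[u ∈ Odds G (c u)]` and `[u ∈ c u]` in this demand. -/

def xCoeff : MLabel → ZMod 2
  | X | XY | Y => 1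
  | Z | XZ | YZ => 0

def zCoeff : MLabel → ZMod 2
  | Z | XZ | YZ | Y => 1
  | X | XY => 0

def toPauli : MLabel → MLabel
  | X | XY => X
  | Y => Y
  | Z | XZ | YZ => Z

@[simp] theorem xCoeff_toPauli (m : MLabel) : m.toPauli.xCoeff = m.xCoeff := by
  cases m <;> rfl

@[simp] theorem zCoeff_toPauli (m : MLabel) : m.toPauli.zCoeff = m.zCoeff := by
  cases m <;> rfl

theorem xCoeff_eq_zero_or_eq_one (m : MLabel) : m.xCoeff = 0 ∨ m.xCoeff = 1 := by
  cases m <;> simp [xCoeff]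

theorem zCoeff_eq_one_of_xCoeff_eq_zero {m : MLabel} (h : m.xCoeff = 0) : m.zCoeff = 1 := by
  cases m <;> simp_all [xCoeff, zCoeff]

theorem toPauli_eq (m : MLabel) : m.toPauli = X ∨ m.toPauli = Y ∨ m.toPauli = Z := by
  cases m <;> simp [toPauli]

end MLabel

section FlowMatrix

variable (G : SimpleGraph V) [DecidableRel G.Adj] (I : Finset V)

def adjRow (u : V) : {v : V // v ∉ I} → ZMod 2 := fun t => G.adjMatrix (ZMod 2) u t

-- the zero vector when `u ∈ I`
def unitRow (u : V) : {v : V // v ∉ I} → ZMod 2 := fun t => if (t : V) = u then 1 else 0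

def flowRow (lam : V → MLabel) (u : V) : {v : V // v ∉ I} → ZMod 2 :=
  (lam u).xCoeff • adjRow G I u + (lam u).zCoeff • unitRow I u

def colIndicator (C : Finset V) : {v : V // v ∉ I} → ZMod 2 :=
  fun t => if (t : V) ∈ C then 1 else 0

variable {G I}

theorem flowRow_dotProduct (lam : V → MLabel) (u : V) (y : {v : V // v ∉ I} → ZMod 2) :
    flowRow G I lam u ⬝ᵥ y =
      (lam u).xCoeff * (adjRow G I u ⬝ᵥ y) + (lam u).zCoeff * (unitRow I u ⬝ᵥ y) := by
  rw [flowRow, add_dotProduct, smul_dotProduct, smul_dotProduct, smul_eq_mul, smul_eq_mul]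

theorem unitRow_dotProduct (t : {v : V // v ∉ I}) (y : {v : V // v ∉ I} → ZMod 2) :
    unitRow I t ⬝ᵥ y = y t := by
  simp [unitRow, dotProduct, Subtype.val_inj]

theorem dotProduct_unitRow (t : {v : V // v ∉ I}) (y : {v : V // v ∉ I} → ZMod 2) :
    y ⬝ᵥ unitRow I t = y t := by
  rw [dotProduct_comm, unitRow_dotProduct]

theorem adjRow_dotProduct_comm (x y : {v : V // v ∉ I} → ZMod 2) :
    y ⬝ᵥ (fun t => adjRow G I t ⬝ᵥ x) = x ⬝ᵥ (fun s => adjRow G I s ⬝ᵥ y) := by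
  set B := (G.adjMatrix (ZMod 2)).submatrix Subtype.val (Subtype.val : {v : V // v ∉ I} → V)
  have hB : Bᵀ = B := ((G.isSymm_adjMatrix).submatrix _).eq
  change y ⬝ᵥ B *ᵥ x = x ⬝ᵥ B *ᵥ y
  rw [dotProduct_mulVec, ← mulVec_transpose, hB, dotProduct_comm]

theorem adjRow_dotProduct_colIndicator {C : Finset V} (hC : ∀ v ∈ C, v ∉ I) (u : V) :
    adjRow G I u ⬝ᵥ colIndicator I C = if u ∈ Odds G C then 1 else 0 := by
  have hsub : ∑ t : {v : V // v ∉ I}, (if (t : V) ∈ C ∧ G.Adj u t then (1 : ZMod 2) else 0) =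
      ∑ v, if v ∈ C ∧ G.Adj u v then 1 else 0 := by
    rw [← Finset.sum_subtype Iᶜ (fun v => Finset.mem_compl)
      (fun v => if v ∈ C ∧ G.Adj u v then (1 : ZMod 2) else 0)]
    refine Finset.sum_subset (Finset.subset_univ _) fun v _ hv => ?_
    rw [if_neg fun h => Finset.mem_compl.not.mp hv (hC v h.1)]
  have hfilter : Finset.univ.filter (fun v => v ∈ C ∧ G.Adj u v) = C ∩ G.neighborFinset u := by
    ext v; simp
  simp only [dotProduct, adjRow, colIndicator, SimpleGraph.adjMatrix_apply, ← ite_and, mul_ite,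
    mul_one, mul_zero]
  rw [hsub, Finset.sum_boole, hfilter]
  by_cases hodd : Odd (C ∩ G.neighborFinset u).card
  · rw [if_pos (by simpa [Odds] using hodd), ZMod.natCast_eq_one_iff_odd]
    exact hodd
  · rw [if_neg (by simpa [Odds] using hodd), ZMod.natCast_eq_zero_iff_even]
    exact Nat.not_odd_iff_even.mp hodd

theorem unitRow_dotProduct_colIndicator {C : Finset V} (hC : ∀ v ∈ C, v ∉ I) (u : V) :
    unitRow I u ⬝ᵥ colIndicator I C = if u ∈ C then 1 else 0 := by
  by_cases hu : u ∈ I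
  · rw [if_neg fun h => hC u h hu]
    refine Finset.sum_eq_zero fun t _ => ?_
    rw [unitRow, if_neg (fun h : (t : V) = u => t.2 (h ▸ hu)), zero_mul]
  · rw [unitRow_dotProduct ⟨u, hu⟩]
    rfl

theorem flowRow_dotProduct_colIndicator (lam : V → MLabel) {C : Finset V} (hC : ∀ v ∈ C, v ∉ I)
    (u : V) :
    flowRow G I lam u ⬝ᵥ colIndicator I C =
      (lam u).xCoeff * (if u ∈ Odds G C then 1 else 0) +
        (lam u).zCoeff * (if u ∈ C then 1 else 0) := by
  rw [flowRow_dotProduct, adjRow_dotProduct_colIndicator hC, unitRow_dotProduct_colIndicator hC]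

end FlowMatrix

namespace PauliFlow

variable {G : SimpleGraph V} [DecidableRel G.Adj] {I O : Finset V} {lam : V → MLabel}
  {c : V → Finset V} {prec : V → V → Prop}

theorem flowRow_dotProduct_colIndicator_self (h : PauliFlow G I O lam c prec) {u : V}
    (hu : u ∉ O) : flowRow G I lam u ⬝ᵥ colIndicator I (c u) = 1 := by
  rw [flowRow_dotProduct_colIndicator lam (h.csub u hu)]
  rcases hl : lam u
  case X => simp [MLabel.xCoeff, MLabel.zCoeff, h.P7 u hu hl]
  case Y =>
    rcases h.P9 u hu hl with ⟨h1, h2⟩ | ⟨h1, h2⟩ <;> simp [MLabel.xCoeff, MLabel.zCoeff, h1, h2]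
  case Z => simp [MLabel.xCoeff, MLabel.zCoeff, h.P8 u hu hl]
  case XY => simp [MLabel.xCoeff, MLabel.zCoeff, (h.P4 u hu hl).2]
  case XZ => simp [MLabel.xCoeff, MLabel.zCoeff, (h.P5 u hu hl).1]
  case YZ => simp [MLabel.xCoeff, MLabel.zCoeff, (h.P6 u hu hl).1]

theorem flowRow_dotProduct_colIndicator_of_not_prec (h : PauliFlow G I O lam c prec) {u v : V}
    (hu : u ∉ O) (hv : v ∉ O) (hvu : v ≠ u) (hprec : ¬ prec u v) :
    flowRow G I lam v ⬝ᵥ colIndicator I (c u) = 0 := by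
  rw [flowRow_dotProduct_colIndicator lam (h.csub u hu)]
  have hc (hX : lam v ≠ .X) (hY : lam v ≠ .Y) : v ∉ c u := fun hvc =>
    hprec (h.P1 u hu v hvc hv hvu.symm hX hY)
  have hodd (hY : lam v ≠ .Y) (hZ : lam v ≠ .Z) : v ∉ Odds G (c u) := fun hvo =>
    hprec (h.P2 u hu v hvo hv hvu.symm hY hZ)
  rcases hl : lam v
  case Y =>
    by_cases hvc : v ∈ c u <;>
      simp [MLabel.xCoeff, MLabel.zCoeff, CharTwo.add_self_eq_zero, hvc,
        ← h.P3 u hu v hv hprec hvu.symm hl]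
  all_goals simp_all [MLabel.xCoeff, MLabel.zCoeff]

theorem linearIndepOn_flowRow (h : PauliFlow G I O lam c prec) :
    LinearIndepOn (ZMod 2) (flowRow G I lam) (↑O)ᶜ :=
  linearIndependent_of_dotProduct_triangular (g := fun u => colIndicator I (c u))
    (fun u v => prec u v) (fun u => h.irrefl u) (fun _ _ _ => h.trans _ _ _)
    (fun u => h.flowRow_dotProduct_colIndicator_self u.2)
    (fun u v hvu =>
      h.flowRow_dotProduct_colIndicator_of_not_prec u.2 v.2 (Subtype.coe_ne_coe.mpr hvu))

theorem label_of_mem_of_notMem (h : PauliFlow G I O lam c prec) {v : V} (hvI : v ∈ I)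
    (hvO : v ∉ O) : lam v = .X ∨ lam v = .XY ∨ lam v = .Y := by
  have hvc : v ∉ c v := fun hv => h.csub v hvO v hv hvI
  rcases hl : lam v
  case Z => exact absurd (h.P8 v hvO hl) hvc
  case XZ => exact absurd (h.P5 v hvO hl).1 hvc
  case YZ => exact absurd (h.P6 v hvO hl).1 hvc
  all_goals simp

end PauliFlow

section FlowOfMatrix

variable {G : SimpleGraph V} [DecidableRel G.Adj] {I O : Finset V}

theorem exists_colIndicator_eq (x : {v : V // v ∉ I} → ZMod 2) :
    ∃ C : Finset V, (∀ v ∈ C, v ∉ I) ∧ colIndicator I C = x := by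
  refine ⟨(Finset.univ.filter (x · ≠ 0)).map (Function.Embedding.subtype _), ?_, ?_⟩
  · intro v hv
    obtain ⟨t, _, rfl⟩ := Finset.mem_map.mp hv
    exact t.2
  · funext t
    have : ∀ a : ZMod 2, (if a ≠ 0 then 1 else 0) = a := by decide
    simpa [colIndicator, Subtype.val_inj] using this (x t)

theorem pauliFlow_of_dotProduct_colIndicator {lam : V → MLabel}
    (hlam : ∀ u, lam u = .X ∨ lam u = .Y ∨ lam u = .Z) {c : V → Finset V}
    (hcI : ∀ u ∉ O, ∀ v ∈ c u, v ∉ I)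
    (hc : ∀ u ∉ O, ∀ v ∉ O, flowRow G I lam v ⬝ᵥ colIndicator I (c u) = if v = u then 1 else 0) :
    PauliFlow G I O lam c (fun _ _ => False) := by
  have key : ∀ u ∉ O, ∀ v ∉ O, (lam v).xCoeff * (if v ∈ Odds G (c u) then 1 else 0) +
      (lam v).zCoeff * (if v ∈ c u then 1 else 0) = if v = u then 1 else 0 := fun u hu v hv => by
    rw [← flowRow_dotProduct_colIndicator lam (hcI u hu), hc u hu v hv]
  refine ⟨fun _ h => h, fun _ _ _ h _ => h, hcI, ?_, ?_, ?_, ?_, ?_, ?_, ?_, ?_, ?_⟩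
  · intro u hu v hvc hv huv hX hY
    have := key u hu v hv
    rcases hlam v with hl | hl | hl <;> simp_all [MLabel.xCoeff, MLabel.zCoeff]
  · intro u hu v hvo hv huv hY hZ
    have := key u hu v hv
    rcases hlam v with hl | hl | hl <;> simp_all [MLabel.xCoeff, MLabel.zCoeff]
  · intro u hu v hv _ huv hY
    have := key u hu v hv
    by_cases hvc : v ∈ c u <;> by_cases hvo : v ∈ Odds G (c u) <;>
      simp_all [MLabel.xCoeff, MLabel.zCoeff]
  · intro u _ hXY
    rcases hlam u with hl | hl | hl <;> simp_all
  · intro u _ hXZ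
    rcases hlam u with hl | hl | hl <;> simp_all
  · intro u _ hYZ
    rcases hlam u with hl | hl | hl <;> simp_all
  · intro u hu hX
    have := key u hu u hu
    simp_all [MLabel.xCoeff, MLabel.zCoeff]
  · intro u hu hZ
    have := key u hu u hu
    simp_all [MLabel.xCoeff, MLabel.zCoeff]
  · intro u hu hY
    have := key u hu u hu
    show (_ ∧ ¬ _) ∨ (_ ∧ ¬ _)
    by_cases hvc : u ∈ c u <;> by_cases hvo : u ∈ Odds G (c u) <;>
      simp_all [MLabel.xCoeff, MLabel.zCoeff, CharTwo.add_self_eq_zero]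

theorem exists_pauliFlow_of_linearIndepOn {lam : V → MLabel}
    (hind : LinearIndepOn (ZMod 2) (flowRow G I lam) (↑O)ᶜ) :
    ∃ c, PauliFlow G I O (MLabel.toPauli ∘ lam) c (fun _ _ => False) := by
  have hcol : ∀ u, ∃ C : Finset V, (∀ v ∈ C, v ∉ I) ∧
      (u ∉ O → ∀ v ∉ O, flowRow G I lam v ⬝ᵥ colIndicator I C = if v = u then 1 else 0) := by
    intro u
    by_cases hu : u ∈ O
    · exact ⟨∅, by simp, fun h => absurd hu h⟩
    obtain ⟨x, hx⟩ := hind.exists_dotProduct_eq_single ⟨u, hu⟩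
    obtain ⟨C, hCI, rfl⟩ := exists_colIndicator_eq x
    refine ⟨C, hCI, fun _ v hv => ?_⟩
    simpa [Pi.single_apply] using hx ⟨v, hv⟩
  choose c hcI hc using hcol
  have hrow : flowRow G I (MLabel.toPauli ∘ lam) = flowRow G I lam := by
    funext u
    simp [flowRow]
  exact ⟨c, pauliFlow_of_dotProduct_colIndicator (lam := MLabel.toPauli ∘ lam)
    (fun u => (lam u).toPauli_eq) (fun u _ => hcI u) (hrow ▸ hc)⟩

end FlowOfMatrix

section Extension

variable {G : SimpleGraph V} [DecidableRel G.Adj] {I O : Finset V} {lam : V → MLabel}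

theorem eq_zero_of_orthogonal_flowRow_adjRow_unitRow
    (hind : LinearIndepOn (ZMod 2) (flowRow G I lam) (↑O)ᶜ) {y : {v : V // v ∉ I} → ZMod 2}
    (hrow : ∀ u ∉ O, flowRow G I lam u ⬝ᵥ y = 0) (hadj : ∀ v ∈ O, adjRow G I v ⬝ᵥ y = 0)
    (hunit : ∀ v ∈ O, unitRow I v ⬝ᵥ y = 0) : y = 0 := by
  have hsupp : ∀ t, y t ≠ 0 → (t : V) ∉ O ∧ (lam t).xCoeff = 1 := by
    intro t hyt
    have htO : (t : V) ∉ O := fun htO => hyt (unitRow_dotProduct t y ▸ hunit t htO)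
    refine ⟨htO, (lam t).xCoeff_eq_zero_or_eq_one.resolve_left fun hX => hyt ?_⟩
    simpa [flowRow_dotProduct, hX, MLabel.zCoeff_eq_one_of_xCoeff_eq_zero hX,
      unitRow_dotProduct] using hrow t htO
  funext w
  by_contra hw
  obtain ⟨hwO, hwX⟩ := hsupp w hw
  obtain ⟨x, hx⟩ := hind.exists_dotProduct_eq_single (⟨w, hwO⟩ : ↥(↑O : Set V)ᶜ)
  replace hx : ∀ v ∉ O, flowRow G I lam v ⬝ᵥ x = if v = w then 1 else 0 := fun v hv => by
    simpa [Pi.single_apply, ← Subtype.val_inj] using hx ⟨v, hv⟩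
  -- Both sides of `y ⬝ᵥ A x = x ⬝ᵥ A y`, for `A` the symmetric adjacency matrix on the
  -- non-inputs, reduce to `∑ t, y t * zCoeff t * x t`, except that the left one also picks up
  -- `y w` from `flowRow w ⬝ᵥ x = 1`.
  have hyAx : ∀ t, y t * (adjRow G I t ⬝ᵥ x) = y t * (unitRow I w t + (lam t).zCoeff * x t) := by
    intro t
    by_cases hyt : y t = 0
    · rw [hyt, zero_mul, zero_mul]
    obtain ⟨htO, htX⟩ := hsupp t hyt
    have := hx t htO
    rw [flowRow_dotProduct, htX, one_mul, unitRow_dotProduct, CharTwo.add_eq_iff_eq_add] at this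
    rw [this]
    rfl
  have hxAy : ∀ s, x s * (adjRow G I s ⬝ᵥ y) = y s * ((lam s).zCoeff * x s) := by
    intro s
    by_cases hsO : (s : V) ∈ O
    · have hys : y s = 0 := by_contra fun h => (hsupp s h).1 hsO
      rw [hadj s hsO, hys, mul_zero, zero_mul]
    rcases (lam s).xCoeff_eq_zero_or_eq_one with hsX | hsX
    · have hys : y s = 0 := by_contra fun h => by simp [(hsupp s h).2] at hsX
      have hxs : x s = 0 := by
        have := hx s hsO
        rw [flowRow_dotProduct, hsX, MLabel.zCoeff_eq_one_of_xCoeff_eq_zero hsX,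
          zero_mul, zero_add, one_mul, unitRow_dotProduct] at this
        rw [this, if_neg]
        rintro hsw
        simp [Subtype.val_inj.mp hsw, hwX] at hsX
      rw [hxs, hys, zero_mul, zero_mul]
    · have := hrow s hsO
      rw [flowRow_dotProduct, hsX, one_mul, unitRow_dotProduct, CharTwo.add_eq_zero] at this
      rw [this]
      ring
  have hsymm := adjRow_dotProduct_comm (G := G) x y
  change ∑ t, y t * (adjRow G I t ⬝ᵥ x) = ∑ s, x s * (adjRow G I s ⬝ᵥ y) at hsymm
  simp only [hyAx, hxAy, mul_add, Finset.sum_add_distrib, add_eq_right] at hsymm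
  exact hw (dotProduct_unitRow w y ▸ hsymm)

theorem exists_adjRow_or_unitRow_notMem_span
    (hind : LinearIndepOn (ZMod 2) (flowRow G I lam) (↑O)ᶜ) (hcard : I.card < O.card) :
    ∃ v ∈ O, adjRow G I v ∉ Submodule.span (ZMod 2) (flowRow G I lam '' (↑O)ᶜ) ∨
      unitRow I v ∉ Submodule.span (ZMod 2) (flowRow G I lam '' (↑O)ᶜ) := by
  by_contra! hall
  have hcard' : Fintype.card ↥(↑O : Set V)ᶜ < Fintype.card {v : V // v ∉ I} := by
    simp only [Fintype.card_compl_set, Fintype.card_subtype_compl, Fintype.card_coe,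
      Finset.coe_sort_coe]
    have := O.card_le_univ
    omega
  obtain ⟨y, hy0, hy⟩ := exists_ne_zero_forall_mem_span_dotProduct_eq_zero
    (fun u : ↥(↑O : Set V)ᶜ => flowRow G I lam u) hcard'
  rw [← Set.image_eq_range] at hy
  exact hy0 (eq_zero_of_orthogonal_flowRow_adjRow_unitRow hind
    (fun u hu => hy _ (Submodule.subset_span ⟨u, hu, rfl⟩))
    (fun v hv => hy _ (hall v hv).1) (fun v hv => hy _ (hall v hv).2))

theorem exists_linearIndepOn_flowRow_erase
    (hind : LinearIndepOn (ZMod 2) (flowRow G I lam) (↑O)ᶜ) (hcard : I.card < O.card) :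
    ∃ v ∈ O, ∃ lam' : V → MLabel, LinearIndepOn (ZMod 2) (flowRow G I lam') (↑(O.erase v))ᶜ := by
  obtain ⟨v, hvO, hv⟩ := exists_adjRow_or_unitRow_notMem_span hind hcard
  have hextend (m : MLabel)
      (hm : flowRow G I (Function.update lam v m) v ∉
        Submodule.span (ZMod 2) (flowRow G I lam '' (↑O)ᶜ)) :
      LinearIndepOn (ZMod 2) (flowRow G I (Function.update lam v m)) (↑(O.erase v))ᶜ := by
    have heq : Set.EqOn (flowRow G I lam) (flowRow G I (Function.update lam v m)) (↑O)ᶜ :=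
      fun u hu => by
        have huv : u ≠ v := fun h => hu (h ▸ hvO)
        simp [flowRow, Function.update_of_ne huv]
    have hcompl : (↑(O.erase v) : Set V)ᶜ = insert v (↑O)ᶜ := by
      ext u
      by_cases huv : u = v <;> simp [huv, hvO]
    rw [hcompl]
    exact (hind.congr heq).insert (heq.image_eq ▸ hm)
  rcases hv with hadj | hunit
  · exact ⟨v, hvO, _, hextend .X (by simpa [flowRow, MLabel.xCoeff, MLabel.zCoeff] using hadj)⟩
  · exact ⟨v, hvO, _, hextend .Z (by simpa [flowRow, MLabel.xCoeff, MLabel.zCoeff] using hunit)⟩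

theorem exists_subset_card_eq_linearIndepOn_flowRow (hIO : I.card ≤ O.card)
    (hind : LinearIndepOn (ZMod 2) (flowRow G I lam) (↑O)ᶜ) :
    ∃ O' ⊆ O, O'.card = I.card ∧
      ∃ lam' : V → MLabel, LinearIndepOn (ZMod 2) (flowRow G I lam') (↑O')ᶜ := by
  induction O using Finset.strongInduction generalizing lam with
  | H O ih =>
    rcases hIO.eq_or_lt with heq | hlt
    · exact ⟨O, subset_rfl, heq.symm, lam, hind⟩
    obtain ⟨v, hvO, lam', hind'⟩ := exists_linearIndepOn_flowRow_erase hind hlt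
    obtain ⟨O', hO'O, hcard, hind''⟩ := ih (O.erase v) (Finset.erase_ssubset hvO)
      (by rw [Finset.card_erase_of_mem hvO]; omega) hind'
    exact ⟨O', hO'O.trans (O.erase_subset v), hcard, hind''⟩

end Extension

theorem reduce_outputs_general (G : SimpleGraph V) [DecidableRel G.Adj]
    (I O : Finset V) (lam : V → MLabel)
    (c : V → Finset V) (prec : V → V → Prop)
    (h : PauliFlow G I O lam c prec) (hcard : I.card < O.card) :
    ∃ O' ⊆ O, O'.card = I.card ∧
      ∃ lam' : V → MLabel,
        (∀ v ∈ I, v ∉ O' → lam' v = MLabel.X ∨ lam' v = MLabel.XY ∨ lam' v = MLabel.Y) ∧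
        ∃ (c' : V → Finset V) (prec' : V → V → Prop),
          PauliFlow G I O' lam' c' prec' := by
  obtain ⟨O', hO'O, hcard', lam', hind⟩ :=
    exists_subset_card_eq_linearIndepOn_flowRow hcard.le h.linearIndepOn_flowRow
  obtain ⟨c', hflow⟩ := exists_pauliFlow_of_linearIndepOn hind
  exact ⟨O', hO'O, hcard', _, fun v hvI hvO => hflow.label_of_mem_of_notMem hvI hvO, c', _, hflow⟩

/-- If a labelled open graph with `I ∩ O = ∅` has a Pauli flow and more outputs
than inputs, then some subset `O' ⊆ O` with `|O'| = |I|` admits a labelling with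
Pauli flow. -/
theorem reduce_outputs (G : SimpleGraph V) [DecidableRel G.Adj]
    (I O : Finset V) (hIO : I ∩ O = ∅) (lam : V → MLabel)
    (hlab : ∀ v ∈ I, lam v = MLabel.X ∨ lam v = MLabel.XY ∨ lam v = MLabel.Y)
    (c : V → Finset V) (prec : V → V → Prop)
    (h : PauliFlow G I O lam c prec) (hcard : I.card < O.card) :
    ∃ O' ⊆ O, O'.card = I.card ∧
      ∃ lam' : V → MLabel,
        (∀ v ∈ I, v ∉ O' → lam' v = MLabel.X ∨ lam' v = MLabel.XY ∨ lam' v = MLabel.Y) ∧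
        ∃ (c' : V → Finset V) (prec' : V → V → Prop),
          PauliFlow G I O' lam' c' prec' :=
  reduce_outputs_general G I O lam c prec h hcard
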